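/- Let H0 and B be n×n complex Hermitian matrices and let f : ℝ → ℝ be continuously differentiable. Then the function s ↦ Tr f(H0 + s·B), where f is applied through the functional calculus for Hermitian matrices, is differentiable on ℝ, and its derivative at s equals Tr( f'(H0 + s·B) · B ). -/

import Mathlib

/-!
For a polynomial `p`, cyclicity of the trace collapses the noncommutative derivative of
`t ↦ (H0 + t • B) ^ k` to `k * Tr((H0 + t • B) ^ (k - 1) * B)`, so `t ↦ Tr p(H0 + t • B)` has
derivative `Tr(p'(H0 + t • B) * B)`. Writing `H = U D U⋆`, we have `λᵢ = (U⋆ H U)ᵢᵢ` and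
`Tr(g(H) * B) = ∑ᵢ g(λᵢ) (U⋆ B U)ᵢᵢ`, and the entries of `U` have modulus at most `1`; hence the
eigenvalues of `H0 + t • B` for `|t - s| < 1` lie in a fixed interval `[-R, R]`, and
`Tr(g(H0 + t • B) * B)` is controlled, uniformly in `t`, by `sup |g|` on `[-R, R]`.
Approximating `f'` uniformly on `[-R, R]` by polynomials (Weierstrass) and integrating gives
polynomials `pₖ` with `pₖ → f` and `pₖ' → f'` uniformly there, so the derivatives of the traces
converge uniformly near `s` and the uniform-limit theorem for derivatives applies.
-/

open Matrix
open scoped ComplexOrder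

/-- The functional calculus `f(H)` of an `n × n` complex Hermitian matrix `H`:
if `H = ∑ᵢ λᵢ Pᵢ` is the spectral decomposition, then `f(H) = ∑ᵢ f(λᵢ) Pᵢ`.
It is defined to be `0` if `H` is not Hermitian. -/
noncomputable def hermFun {n : ℕ} (H : Matrix (Fin n) (Fin n) ℂ) (f : ℝ → ℝ) :
    Matrix (Fin n) (Fin n) ℂ :=
  if hH : H.IsHermitian then
    (hH.eigenvectorUnitary : Matrix (Fin n) (Fin n) ℂ) *
      Matrix.diagonal (fun i => (f (hH.eigenvalues i) : ℂ)) *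
      star (hH.eigenvectorUnitary : Matrix (Fin n) (Fin n) ℂ)
  else 0

open Polynomial Filter Set

theorem Polynomial.derivative_surjective {R : Type*} [Field R] [CharZero R] :
    Function.Surjective (derivative : R[X] → R[X]) := by
  intro q
  induction q using Polynomial.induction_on' with
  | add p q hp hq =>
    obtain ⟨p', rfl⟩ := hp
    obtain ⟨q', rfl⟩ := hq
    exact ⟨p' + q', derivative_add⟩
  | monomial k a =>
    refine ⟨monomial (k + 1) (a / (k + 1)), ?_⟩
    rw [derivative_monomial]
    push_cast
    field_simp

theorem tendstoUniformlyOn_of_dist_lt_one_div {α β : Type*} [PseudoMetricSpace β]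
    {F : ℕ → α → β} {f : α → β} {s : Set α}
    (h : ∀ k, ∀ x ∈ s, dist (f x) (F k x) < 1 / ((k : ℝ) + 1)) :
    TendstoUniformlyOn F f atTop s := by
  rw [Metric.tendstoUniformlyOn_iff]
  intro ε hε
  obtain ⟨N, hN⟩ := exists_nat_one_div_lt hε
  filter_upwards [eventually_ge_atTop N] with k hk x hx
  exact (h k x hx).trans_le ((Nat.one_div_le_one_div hk).trans hN.le)

theorem exists_polynomial_near_of_contDiff {f : ℝ → ℝ} (hf : ContDiff ℝ 1 f) (a b : ℝ)
    {ε : ℝ} (hε : 0 < ε) :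
    ∃ p : ℝ[X], ∀ x ∈ Icc a b,
      |p.eval x - f x| < ε ∧ |(derivative p).eval x - deriv f x| < ε := by
  set δ := ε / (|b - a| + 1)
  have hδ : 0 < δ := by positivity
  have hδε : δ * (|b - a| + 1) = ε := div_mul_cancel₀ _ (by positivity)
  obtain ⟨q, hq⟩ := exists_polynomial_near_of_continuousOn a b (deriv f)
    (hf.continuous_deriv le_rfl).continuousOn δ hδ
  obtain ⟨p₀, rfl⟩ := derivative_surjective q
  set p := p₀ + C (f a - p₀.eval a)
  have hp' : derivative p = derivative p₀ := by simp [p]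
  have hmvt := norm_image_sub_le_of_norm_deriv_le_segment' (C := δ)
    (f := fun x => p.eval x - f x) (f' := fun x => (derivative p).eval x - deriv f x)
    (fun x _ =>
      ((p.hasDerivAt x).sub (hf.differentiable one_ne_zero x).hasDerivAt).hasDerivWithinAt)
    (fun x hx => by rw [hp']; exact (hq x (Ico_subset_Icc_self hx)).le)
  refine ⟨p, fun x hx => ⟨?_, ?_⟩⟩
  · have hpa : p.eval a - f a = 0 := by simp [p]
    have hxa := hmvt x hx
    rw [hpa, sub_zero, Real.norm_eq_abs] at hxa
    calc |p.eval x - f x| ≤ δ * (x - a) := hxa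
      _ ≤ δ * |b - a| := by gcongr; exact (sub_le_sub_right hx.2 a).trans (le_abs_self _)
      _ < ε := by nlinarith
  · rw [hp']
    exact (hq x hx).trans_le (by nlinarith [abs_nonneg (b - a)])

theorem exists_polynomial_tendstoUniformlyOn {f : ℝ → ℝ} (hf : ContDiff ℝ 1 f) (a b : ℝ) :
    ∃ p : ℕ → ℝ[X], TendstoUniformlyOn (fun k x => (p k).eval x) f atTop (Icc a b) ∧
      TendstoUniformlyOn (fun k x => (derivative (p k)).eval x) (deriv f) atTop (Icc a b) := by
  choose p hp using fun k : ℕ =>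
    exists_polynomial_near_of_contDiff hf a b (Nat.one_div_pos_of_nat (n := k))
  refine ⟨p, tendstoUniformlyOn_of_dist_lt_one_div fun k x hx => ?_,
    tendstoUniformlyOn_of_dist_lt_one_div fun k x hx => ?_⟩
  · rw [Real.dist_eq, abs_sub_comm]
    exact (hp k x hx).1
  · rw [Real.dist_eq, abs_sub_comm]
    exact (hp k x hx).2

namespace Matrix

theorem IsHermitian.add_smul_real {m 𝕜 : Type*} [RCLike 𝕜] {A B : Matrix m m 𝕜}
    (hA : A.IsHermitian) (hB : B.IsHermitian) (t : ℝ) : (A + t • B).IsHermitian :=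
  hA.add (hB.smul (IsSelfAdjoint.all t))

section Entrywise

variable {l m n o : Type*} [Fintype m] [Fintype n]

theorem norm_mul_mul_apply_le {α : Type*} [NormedRing α] {P : Matrix l m α} {Q : Matrix n o α}
    (hP : ∀ i j, ‖P i j‖ ≤ 1) (hQ : ∀ i j, ‖Q i j‖ ≤ 1) (B : Matrix m n α) (i : l) (r : o) :
    ‖(P * B * Q) i r‖ ≤ ∑ j, ∑ k, ‖B j k‖ := by
  rw [Finset.sum_comm]
  simp only [mul_apply, Finset.sum_mul]
  refine norm_sum_le_of_le _ fun k _ => norm_sum_le_of_le _ fun j _ => ?_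
  calc ‖P i j * B j k * Q k r‖ ≤ ‖P i j‖ * ‖B j k‖ * ‖Q k r‖ := norm_mul₃_le
    _ ≤ 1 * ‖B j k‖ * 1 := by gcongr <;> simp_all
    _ = ‖B j k‖ := by ring

theorem sum_sum_norm_add_smul_apply_le {E : Type*} [SeminormedAddCommGroup E] [NormedSpace ℝ E]
    (A B : Matrix m n E) (t : ℝ) :
    ∑ j, ∑ k, ‖(A + t • B) j k‖ ≤ ∑ j, ∑ k, ‖A j k‖ + |t| * ∑ j, ∑ k, ‖B j k‖ := by
  simp only [Finset.mul_sum, ← Finset.sum_add_distrib]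
  gcongr with j _ k _
  rw [add_apply, smul_apply, ← Real.norm_eq_abs, ← norm_smul]
  exact norm_add_le _ _

end Entrywise

variable {m 𝕜 : Type*} [Fintype m] [DecidableEq m] [RCLike 𝕜]

theorem IsHermitian.abs_eigenvalues_le {A : Matrix m m 𝕜} (hA : A.IsHermitian) (i : m) :
    |hA.eigenvalues i| ≤ ∑ j, ∑ k, ‖A j k‖ := by
  have h := congr_fun₂ hA.conjStarAlgAut_star_eigenvectorUnitary i i
  rw [Unitary.conjStarAlgAut_star_apply, diagonal_apply_eq, Function.comp_apply] at h
  rw [← RCLike.norm_ofReal (K := 𝕜), ← h]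
  exact norm_mul_mul_apply_le
    (entry_norm_bound_of_unitary (Unitary.star_mem hA.eigenvectorUnitary.2))
    (entry_norm_bound_of_unitary hA.eigenvectorUnitary.2) A i i

theorem norm_trace_conj_diagonal_mul_le {U : Matrix m m 𝕜} (hU : U ∈ unitaryGroup m 𝕜)
    (d : m → 𝕜) (B : Matrix m m 𝕜) {ε : ℝ} (hd : ∀ i, ‖d i‖ ≤ ε) :
    ‖trace (U * diagonal d * star U * B)‖ ≤ Fintype.card m * ε * ∑ j, ∑ k, ‖B j k‖ := by
  have htrace : trace (U * diagonal d * star U * B) = ∑ i, d i * (star U * B * U) i i := by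
    rw [Matrix.mul_assoc _ (star U), trace_mul_cycle, trace_mul_comm]
    simp [trace, diagonal_mul]
  rw [htrace]
  calc ‖∑ i, d i * (star U * B * U) i i‖ ≤ ∑ _i : m, ε * ∑ j, ∑ k, ‖B j k‖ := by
        refine norm_sum_le_of_le _ fun i _ => ?_
        rw [norm_mul]
        exact mul_le_mul (hd i) (norm_mul_mul_apply_le (entry_norm_bound_of_unitary
          (Unitary.star_mem hU)) (entry_norm_bound_of_unitary hU) B i i) (norm_nonneg _)
          ((norm_nonneg _).trans (hd i))
    _ = Fintype.card m * ε * ∑ j, ∑ k, ‖B j k‖ := by simp [mul_assoc]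

open scoped Matrix.Norms.Operator in
theorem hasDerivAt_trace_pow_add_smul (A B : Matrix m m 𝕜) (k : ℕ) (s : ℝ) :
    HasDerivAt (fun t : ℝ => trace ((A + t • B) ^ k))
      (k * trace ((A + s • B) ^ (k - 1) * B)) s := by
  have hline : HasDerivAt (fun t : ℝ => A + t • B) B s :=
    (((hasDerivAt_id s).smul_const B).const_add A).congr_deriv (one_smul ℝ B)
  let tr : Matrix m m 𝕜 →L[ℝ] 𝕜 :=
    ((traceLinearMap m 𝕜 𝕜).restrictScalars ℝ).toContinuousLinearMap
  refine (tr.hasFDerivAt.comp_hasDerivAt s (hline.fun_pow' k)).congr_deriv ?_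
  have hterm : ∀ i ∈ Finset.range k,
      trace ((A + s • B) ^ (k.pred - i) * B * (A + s • B) ^ i) =
        trace ((A + s • B) ^ (k - 1) * B) := by
    intro i hi
    rw [Nat.pred_eq_sub_one, trace_mul_cycle, ← pow_add,
      Nat.add_sub_of_le (by simp at hi; omega)]
  change trace _ = _
  rw [trace_sum, Finset.sum_congr rfl hterm]
  simp

theorem hasDerivAt_trace_aeval_add_smul (A B : Matrix m m 𝕜) (p : ℝ[X]) (s : ℝ) :
    HasDerivAt (fun t : ℝ => trace (aeval (A + t • B) p))
      (trace (aeval (A + s • B) (derivative p) * B)) s := by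
  induction p using Polynomial.induction_on' with
  | add p q hp hq => simpa only [map_add, trace_add, add_mul] using hp.fun_add hq
  | monomial k a =>
    have hfun : (fun t : ℝ => trace (aeval (A + t • B) (monomial k a))) =
        fun t => a • trace ((A + t • B) ^ k) :=
      funext fun t => by rw [aeval_monomial, ← Algebra.smul_def, trace_smul]
    rw [hfun, derivative_monomial, aeval_monomial, ← Algebra.smul_def, smul_mul_assoc,
      trace_smul, mul_smul, Nat.cast_smul_eq_nsmul, nsmul_eq_mul]
    exact (hasDerivAt_trace_pow_add_smul A B k s).fun_const_smul a

end Matrix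

section HermFun

variable {n : ℕ} {H : Matrix (Fin n) (Fin n) ℂ}

theorem hermFun_eq_cfc (hH : H.IsHermitian) (f : ℝ → ℝ) : hermFun H f = cfc f H := by
  rw [hermFun, dif_pos hH, hH.cfc_eq, IsHermitian.cfc, Unitary.conjStarAlgAut_apply]
  rfl

theorem aeval_eq_hermFun (hH : H.IsHermitian) (p : ℝ[X]) :
    aeval H p = hermFun H (fun x => p.eval x) := by
  rw [hermFun_eq_cfc hH, cfc_polynomial p H hH.isSelfAdjoint]

theorem hermFun_sub (hH : H.IsHermitian) (f g : ℝ → ℝ) :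
    hermFun H (f - g) = hermFun H f - hermFun H g := by
  simp only [hermFun, dif_pos hH, Pi.sub_apply, Complex.ofReal_sub, ← diagonal_sub,
    Matrix.mul_sub, Matrix.sub_mul]

theorem norm_trace_hermFun_mul_le (hH : H.IsHermitian) (g : ℝ → ℝ)
    (B : Matrix (Fin n) (Fin n) ℂ) {ε : ℝ} (hg : ∀ i, |g (hH.eigenvalues i)| ≤ ε) :
    ‖trace (hermFun H g * B)‖ ≤ n * ε * ∑ j, ∑ k, ‖B j k‖ := by
  simpa [hermFun, hH] using
    norm_trace_conj_diagonal_mul_le hH.eigenvectorUnitary.2 _ B (ε := ε) (by simpa using hg)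

theorem tendstoUniformlyOn_trace_hermFun_mul {α ι : Type*} {l : Filter ι}
    {H : α → Matrix (Fin n) (Fin n) ℂ} (hH : ∀ t, (H t).IsHermitian) {S : Set α} {K : Set ℝ}
    (hK : ∀ t ∈ S, ∀ i, (hH t).eigenvalues i ∈ K) {F : ι → ℝ → ℝ} {f : ℝ → ℝ}
    (hF : TendstoUniformlyOn F f l K) (B : Matrix (Fin n) (Fin n) ℂ) :
    TendstoUniformlyOn (fun k t => (trace (hermFun (H t) (F k) * B)).re)
      (fun t => (trace (hermFun (H t) f * B)).re) l S := by
  rw [Metric.tendstoUniformlyOn_iff] at hF ⊢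
  intro ε hε
  set C := n * ∑ j, ∑ k, ‖B j k‖
  have hC : 0 ≤ C := by positivity
  filter_upwards [hF (ε / (C + 1)) (by positivity)] with k hk t ht
  calc dist (trace (hermFun (H t) f * B)).re (trace (hermFun (H t) (F k) * B)).re
      ≤ ‖trace (hermFun (H t) (f - F k) * B)‖ := by
        rw [hermFun_sub (hH t), Matrix.sub_mul, trace_sub, Real.dist_eq, ← Complex.sub_re]
        exact Complex.abs_re_le_norm _
    _ ≤ n * (ε / (C + 1)) * ∑ j, ∑ k, ‖B j k‖ :=
        norm_trace_hermFun_mul_le (hH t) _ B fun i => (hk _ (hK t ht i)).le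
    _ = C / (C + 1) * ε := by ring
    _ < ε := by
        rw [div_mul_eq_mul_div, div_lt_iff₀ (by positivity)]
        nlinarith

theorem hasDerivAt_trace_hermFun_polynomial {H0 B : Matrix (Fin n) (Fin n) ℂ}
    (hH0 : H0.IsHermitian) (hB : B.IsHermitian) (p : ℝ[X]) (s : ℝ) :
    HasDerivAt (fun t : ℝ => (trace (hermFun (H0 + t • B) fun x => p.eval x)).re)
      (trace (hermFun (H0 + s • B) (fun x => (derivative p).eval x) * B)).re s := by
  simp only [← aeval_eq_hermFun (hH0.add_smul_real hB _)]
  exact Complex.reCLM.hasFDerivAt.comp_hasDerivAt s (hasDerivAt_trace_aeval_add_smul H0 B p s)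

end HermFun

/-- **Differentiation of the trace.**  For `H0`, `B` Hermitian and `f : ℝ → ℝ`
continuously differentiable, the map `s ↦ Tr f(H0 + s • B)` is differentiable
on `ℝ` with derivative `Tr(f'(H0 + s • B) · B)` at each `s`. -/
theorem hasDerivAt_trace_hermFun {n : ℕ} (H0 B : Matrix (Fin n) (Fin n) ℂ)
    (hH0 : H0.IsHermitian) (hB : B.IsHermitian) (f : ℝ → ℝ)
    (hf : ContDiff ℝ 1 f) (s : ℝ) :
    HasDerivAt (fun t : ℝ => (Matrix.trace (hermFun (H0 + t • B) f)).re)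
      ((Matrix.trace (hermFun (H0 + s • B) (deriv f) * B)).re) s := by
  have hH : ∀ t : ℝ, (H0 + t • B).IsHermitian := hH0.add_smul_real hB
  set R := ∑ j, ∑ k, ‖H0 j k‖ + (|s| + 1) * ∑ j, ∑ k, ‖B j k‖
  have hspec : ∀ t ∈ Metric.ball s 1, ∀ i, (hH t).eigenvalues i ∈ Icc (-R) R := by
    intro t ht i
    have ht' : |t| ≤ |s| + 1 := by
      have := abs_sub_abs_le_abs_sub t s
      rw [Metric.mem_ball, Real.dist_eq] at ht
      linarith
    rw [mem_Icc, ← abs_le]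
    calc |(hH t).eigenvalues i| ≤ ∑ j, ∑ k, ‖(H0 + t • B) j k‖ := (hH t).abs_eigenvalues_le i
      _ ≤ ∑ j, ∑ k, ‖H0 j k‖ + |t| * ∑ j, ∑ k, ‖B j k‖ := sum_sum_norm_add_smul_apply_le H0 B t
      _ ≤ R := by unfold R; gcongr
  obtain ⟨p, hp, hp'⟩ := exists_polynomial_tendstoUniformlyOn hf (-R) R
  refine hasDerivAt_of_tendstoUniformlyOn Metric.isOpen_ball
    (tendstoUniformlyOn_trace_hermFun_mul hH hspec hp' B)
    (.of_forall fun k t _ => hasDerivAt_trace_hermFun_polynomial hH0 hB (p k) t)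
    (fun t ht => ?_) (Metric.mem_ball_self one_pos)
  simpa using (tendstoUniformlyOn_trace_hermFun_mul hH hspec hp 1).tendsto_at ht
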